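/- arXiv:1811.03035 — 2 statements merged into one kernel-verified Lean document; each statement's English description precedes it below -/
import Mathlib

section
/- (Static values cannot decrease in expectation after computations.) In the n-step MDP setting with a sub-σ-algebra 𝒢 ⊆ 𝓕, for every n ∈ ℕ, every state s and action a: E[φ_n^𝒢(s,a)] ≥ φ_n(s,a). -/
open MeasureTheory

/-- Pointwise `n`-step backup of the random frontier values `Z`:
`Υ_0(s,a) = Z(s,a)` and
`Υ_{n+1}(s,a) = Σ_{s'} P(s,a,s')·(R(s,a,s') + γ·max_{a' ∈ A_{s'}} Υ_n(s',a'))`. -/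
noncomputable def Upsilon {Ω S A : Type*} [Fintype S] (As : S → Finset A)
    (hAs : ∀ s, (As s).Nonempty) (P R : S → A → S → ℝ) (γ : ℝ)
    (Z : S → A → Ω → ℝ) : ℕ → S → A → Ω → ℝ
  | 0 => fun s a ω => Z s a ω
  | n + 1 => fun s a ω => ∑ s' : S, P s a s' *
      (R s a s' + γ * (As s').sup' (hAs s') fun a' => Upsilon As hAs P R γ Z n s' a' ω)

/-- Deterministic `n`-step backup of a base value function: used for the static value `φ_n`
(base `(s,a) ↦ E[Z(s,a)]`) and, pointwise in `ω`, for the conditional static value `φ_n^𝒢`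
(base `(s,a) ↦ E[Z(s,a)|𝒢](ω)`). -/
noncomputable def stepValue {S A : Type*} [Fintype S] (As : S → Finset A)
    (hAs : ∀ s, (As s).Nonempty) (P R : S → A → S → ℝ) (γ : ℝ)
    (base : S → A → ℝ) : ℕ → S → A → ℝ
  | 0 => base
  | n + 1 => fun s a => ∑ s' : S, P s a s' *
      (R s a s' + γ * (As s').sup' (hAs s') fun a' => stepValue As hAs P R γ base n s' a')

/-!
The Bellman backup `φ ↦ Σ_{s'} P(s,a,s')·(R(s,a,s') + γ·max_{a'} φ(s',a'))` is monotone and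
convex (for `P ≥ 0`, `γ ≥ 0`), so by Jensen the backup of the expected values is at most the
expected backup. Iterating gives `φ_n(E[base]) ≤ E[φ_n(base)]` for any integrable random base,
and the tower property `E[E[Z | 𝒢]] = E[Z]` turns the conditional static value into such a base.
-/

theorem MeasureTheory.Integrable.finset_sup' {Ω ι β : Type*} {mΩ : MeasurableSpace Ω}
    {μ : Measure Ω} [NormedAddCommGroup β] [Lattice β] [HasSolidNorm β] [IsOrderedAddMonoid β]
    {t : Finset ι} (ht : t.Nonempty) {f : ι → Ω → β} (hf : ∀ i ∈ t, Integrable (f i) μ) :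
    Integrable (fun ω => t.sup' ht fun i => f i ω) μ := by
  simp only [← Finset.sup'_apply]
  exact Finset.sup'_induction (p := (Integrable · μ)) ht f (fun _ hg _ hh => hg.sup hh) hf

theorem Finset.sup'_integral_le_integral_sup' {Ω ι : Type*} {mΩ : MeasurableSpace Ω}
    {μ : Measure Ω} {t : Finset ι} (ht : t.Nonempty) {f : ι → Ω → ℝ}
    (hf : ∀ i ∈ t, Integrable (f i) μ) :
    (t.sup' ht fun i => ∫ ω, f i ω ∂μ) ≤ ∫ ω, t.sup' ht (fun i => f i ω) ∂μ :=
  Finset.sup'_le ht _ fun i hi => integral_mono (hf i hi) (Integrable.finset_sup' ht hf)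
    fun ω => Finset.le_sup' (fun j => f j ω) hi

section stepValue

variable {Ω S A : Type*} {mΩ : MeasurableSpace Ω} {μ : Measure Ω} [Fintype S]
  {As : S → Finset A} {hAs : ∀ s, (As s).Nonempty} {P R : S → A → S → ℝ} {γ : ℝ}
  {base : Ω → S → A → ℝ}

theorem integrable_stepValue [IsFiniteMeasure μ]
    (hbase : ∀ s a, Integrable (fun ω => base ω s a) μ) :
    ∀ n s a, Integrable (fun ω => stepValue As hAs P R γ (base ω) n s a) μ
  | 0, s, a => hbase s a
  | n + 1, s, a => by
    refine integrable_finsetSum _ fun s' _ => .const_mul ?_ _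
    exact (integrable_const _).add <|
      (Integrable.finset_sup' (hAs s') fun a' _ => integrable_stepValue hbase n s' a').const_mul _

theorem stepValue_integral_le_integral_stepValue [IsProbabilityMeasure μ]
    (hP : ∀ s a s', 0 ≤ P s a s') (hγ : 0 ≤ γ)
    (hbase : ∀ s a, Integrable (fun ω => base ω s a) μ) :
    ∀ n s a, stepValue As hAs P R γ (fun s a => ∫ ω, base ω s a ∂μ) n s a ≤
      ∫ ω, stepValue As hAs P R γ (base ω) n s a ∂μ
  | 0, s, a => le_rfl
  | n + 1, s, a => by
    have hint := integrable_stepValue (hAs := hAs) (P := P) (R := R) (γ := γ) hbase n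
    have hsup : ∀ s', Integrable
        (fun ω => (As s').sup' (hAs s') fun a' => stepValue As hAs P R γ (base ω) n s' a') μ :=
      fun s' => Integrable.finset_sup' (hAs s') fun a' _ => hint s' a'
    have hterm : ∀ s', Integrable (fun ω => P s a s' * (R s a s' +
        γ * (As s').sup' (hAs s') fun a' => stepValue As hAs P R γ (base ω) n s' a')) μ :=
      fun s' => ((integrable_const _).add ((hsup s').const_mul _)).const_mul _
    simp only [stepValue]
    rw [integral_finsetSum _ fun s' _ => hterm s']
    refine Finset.sum_le_sum fun s' _ => ?_
    rw [integral_const_mul, integral_add (integrable_const _) ((hsup s').const_mul _),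
      integral_const_mul, integral_const, probReal_univ, one_smul]
    gcongr
    · exact hP s a s'
    calc (As s').sup' (hAs s') (fun a' => stepValue As hAs P R γ _ n s' a')
        ≤ (As s').sup' (hAs s') fun a' => ∫ ω, stepValue As hAs P R γ (base ω) n s' a' ∂μ :=
          Finset.sup'_mono_fun fun a' _ =>
            stepValue_integral_le_integral_stepValue hP hγ hbase n s' a'
      _ ≤ _ := Finset.sup'_integral_le_integral_sup' (hAs s') fun a' _ => hint s' a'

end stepValue

theorem voc_stmt14_general {Ω S A : Type*} {mΩ : MeasurableSpace Ω} (μ : Measure Ω)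
    [IsProbabilityMeasure μ] [Fintype S]
    (As : S → Finset A) (hAs : ∀ s, (As s).Nonempty) (P R : S → A → S → ℝ)
    (hP : ∀ s a s', 0 ≤ P s a s')
    (γ : ℝ) (hγ : 0 ≤ γ) (Z : S → A → Ω → ℝ)
    (m : MeasurableSpace Ω) (hm : m ≤ mΩ) :
    ∀ (n : ℕ) (s : S) (a : A),
      stepValue As hAs P R γ (fun s' a' => ∫ ω, Z s' a' ω ∂μ) n s a ≤
        ∫ ω, stepValue As hAs P R γ (fun s' a' => (μ[Z s' a'|m]) ω) n s a ∂μ := by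
  have htower : (fun s' a' => ∫ ω, Z s' a' ω ∂μ) = fun s' a' => ∫ ω, (μ[Z s' a'|m]) ω ∂μ := by
    ext s' a'
    exact (integral_condExp hm).symm
  rw [htower]
  exact stepValue_integral_le_integral_stepValue hP hγ fun _ _ => integrable_condExp

/-- Static values cannot decrease in expectation after computations: for a
sub-σ-algebra `𝒢 ⊆ 𝓕`, for every `n`, `s`, `a`, `E[φ_n^𝒢(s,a)] ≥ φ_n(s,a)`. -/
theorem voc_stmt14 {Ω S A : Type*} {mΩ : MeasurableSpace Ω} (μ : Measure Ω)
    [IsProbabilityMeasure μ] [Fintype S] [Nonempty S] [Fintype A] [Nonempty A]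
    (As : S → Finset A) (hAs : ∀ s, (As s).Nonempty) (P R : S → A → S → ℝ)
    (hP : ∀ s a s', 0 ≤ P s a s') (hPsum : ∀ s a, ∑ s', P s a s' = 1)
    (γ : ℝ) (hγ : 0 ≤ γ) (Z : S → A → Ω → ℝ) (hZ : ∀ s a, Integrable (Z s a) μ)
    (m : MeasurableSpace Ω) (hm : m ≤ mΩ) :
    ∀ (n : ℕ) (s : S) (a : A),
      stepValue As hAs P R γ (fun s' a' => ∫ ω, Z s' a' ω ∂μ) n s a ≤
        ∫ ω, stepValue As hAs P R γ (fun s' a' => (μ[Z s' a'|m]) ω) n s a ∂μ :=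
  voc_stmt14_general μ As hAs P R hP γ hγ Z m hm
end

section
/- (Sandwich between static and dynamic values.) In the n-step MDP setting with a sub-σ-algebra 𝒢 ⊆ 𝓕, for every n ∈ ℕ, every state s and action a: ψ_n(s,a) ≥ E[φ_n^𝒢(s,a)] ≥ φ_n(s,a), where ψ_n(s,a) := E[Υ_n(s,a)]. That is, the expected static value after any computation lies between the static and the dynamic value. -/
open MeasureTheory

/-!
The backup `v ↦ Σ_{s'} P(s,a,s')·(R(s,a,s') + γ·max_{a'} v(s',a'))` is monotone and convex in `v`,
being a nonnegative combination of affine maps of a maximum. Conditional expectation is linear,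
and a maximum of conditional expectations is a.e. below the conditional expectation of the
maximum, so by induction on `n` the backup of `E[Z|𝒢]` is a.e. below `E[Υ_n|𝒢]`; integrating
gives the first inequality. The static value is the conditional static value for the trivial
σ-algebra, so the second inequality is the first one applied to `E[Z|𝒢]` in place of `Z`.
-/

open Filter

section

variable {Ω S A : Type*} {mΩ : MeasurableSpace Ω} {μ : Measure Ω}

lemma Integrable.finset_sup' {ι : Type*} {s : Finset ι} (hs : s.Nonempty) {f : ι → Ω → ℝ}
    (hf : ∀ i ∈ s, Integrable (f i) μ) : Integrable (fun ω => s.sup' hs fun i => f i ω) μ := by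
  simpa only [← Finset.sup'_apply] using
    Finset.sup'_induction hs f (p := fun g => Integrable g μ) (fun _ h₁ _ h₂ => h₁.sup h₂) hf

lemma finset_sup'_condExp_ae_le {ι : Type*} {m : MeasurableSpace Ω} {s : Finset ι}
    (hs : s.Nonempty) {f : ι → Ω → ℝ} (hf : ∀ i ∈ s, Integrable (f i) μ) :
    (fun ω => s.sup' hs fun i => (μ[f i|m]) ω) ≤ᵐ[μ] μ[fun ω => s.sup' hs fun i => f i ω|m] := by
  have hle : ∀ i ∈ s, μ[f i|m] ≤ᵐ[μ] μ[fun ω => s.sup' hs fun i => f i ω|m] := fun i hi =>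
    condExp_mono (hf i hi) (Integrable.finset_sup' hs hf)
      (Eventually.of_forall fun ω => s.le_sup' (f · ω) hi)
  filter_upwards [(eventually_all_finset s).2 hle] with ω hω
  exact Finset.sup'_le _ _ hω

lemma condExp_const_add_const_mul [IsFiniteMeasure μ] {m : MeasurableSpace Ω} (hm : m ≤ mΩ)
    (a b : ℝ) {f : Ω → ℝ} (hf : Integrable f μ) :
    μ[fun ω => a + b * f ω|m] =ᵐ[μ] fun ω => a + b * (μ[f|m]) ω := by
  filter_upwards [condExp_add (integrable_const a) (hf.const_mul b) m, condExp_smul b f m]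
    with ω h_add h_smul
  calc μ[fun ω => a + b * f ω|m] ω = (μ[fun _ => a|m] + μ[fun ω => b * f ω|m]) ω := h_add
    _ = a + b * (μ[f|m]) ω := by rw [Pi.add_apply, condExp_const hm]; exact congrArg (a + ·) h_smul

lemma condExp_sum_mul_const_add_const_mul [Fintype S] [IsFiniteMeasure μ]
    {m : MeasurableSpace Ω} (hm : m ≤ mΩ) (c r : S → ℝ) (γ : ℝ) {F : S → Ω → ℝ}
    (hF : ∀ s, Integrable (F s) μ) :
    μ[fun ω => ∑ s, c s * (r s + γ * F s ω)|m]
      =ᵐ[μ] fun ω => ∑ s, c s * (r s + γ * (μ[F s|m]) ω) := by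
  have hterm : ∀ s, μ[fun ω => c s * (r s + γ * F s ω)|m]
      =ᵐ[μ] fun ω => c s * (r s + γ * (μ[F s|m]) ω) := fun s =>
    calc μ[fun ω => c s * (r s + γ * F s ω)|m]
        = μ[fun ω => c s * r s + c s * γ * F s ω|m] := by congr 1; funext ω; ring
      _ =ᵐ[μ] fun ω => c s * r s + c s * γ * (μ[F s|m]) ω :=
        condExp_const_add_const_mul hm _ _ (hF s)
      _ = fun ω => c s * (r s + γ * (μ[F s|m]) ω) := by funext ω; ring
  have hsum : (fun ω => ∑ s, c s * (r s + γ * F s ω)) = ∑ s, fun ω => c s * (r s + γ * F s ω) := by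
    funext ω; simp only [Finset.sum_apply]
  rw [hsum]
  have hint : ∀ s, Integrable (fun ω => c s * (r s + γ * F s ω)) μ := fun s =>
    ((integrable_const _).add ((hF s).const_mul γ)).const_mul (c s)
  filter_upwards [condExp_finsetSum (fun s _ => hint s) m, ae_all_iff.2 hterm]
    with ω h_sum h_term
  rw [h_sum, Finset.sum_apply]
  exact Finset.sum_congr rfl fun s _ => h_term s

section Backup

variable [Fintype S] (As : S → Finset A) (hAs : ∀ s, (As s).Nonempty) (P R : S → A → S → ℝ)
  (γ : ℝ)

lemma stepValue_eq_Upsilon (b : S → A → Ω → ℝ) (n : ℕ) (s : S) (a : A) (ω : Ω) :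
    stepValue As hAs P R γ (fun s' a' => b s' a' ω) n s a = Upsilon As hAs P R γ b n s a ω := by
  induction n generalizing s a with
  | zero => rfl
  | succ n ih => simp only [stepValue, Upsilon, ih]

lemma integrable_Upsilon [IsFiniteMeasure μ] {b : S → A → Ω → ℝ}
    (hb : ∀ s a, Integrable (b s a) μ) (n : ℕ) (s : S) (a : A) :
    Integrable (Upsilon As hAs P R γ b n s a) μ := by
  induction n generalizing s a with
  | zero => exact hb s a
  | succ n ih =>
    exact integrable_finsetSum _ fun s' _ => ((integrable_const _).add
      ((Integrable.finset_sup' (hAs s') fun a' _ => ih s' a').const_mul γ)).const_mul _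

theorem Upsilon_condExp_ae_le [IsFiniteMeasure μ] (hP : ∀ s a s', 0 ≤ P s a s') (hγ : 0 ≤ γ)
    {Z : S → A → Ω → ℝ} (hZ : ∀ s a, Integrable (Z s a) μ) {m : MeasurableSpace Ω}
    (hm : m ≤ mΩ) (n : ℕ) (s : S) (a : A) :
    Upsilon As hAs P R γ (fun s' a' => μ[Z s' a'|m]) n s a
      ≤ᵐ[μ] μ[Upsilon As hAs P R γ Z n s a|m] := by
  induction n generalizing s a with
  | zero => exact EventuallyLE.refl _ _
  | succ n ih =>
    have hint : ∀ s', Integrable (fun ω => (As s').sup' (hAs s') fun a' =>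
        Upsilon As hAs P R γ Z n s' a' ω) μ := fun s' =>
      Integrable.finset_sup' (hAs s') fun a' _ => integrable_Upsilon As hAs P R γ hZ n s' a'
    have hmax : ∀ s', (fun ω => (As s').sup' (hAs s') fun a' =>
          Upsilon As hAs P R γ (fun s a => μ[Z s a|m]) n s' a' ω)
        ≤ᵐ[μ] μ[fun ω => (As s').sup' (hAs s') fun a' => Upsilon As hAs P R γ Z n s' a' ω|m] :=
      fun s' => EventuallyLE.trans
        (((eventually_all_finset _).2 fun a' _ => ih s' a').mono fun _ hω =>
          Finset.sup'_mono_fun hω)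
        (finset_sup'_condExp_ae_le (hAs s') fun a' _ => integrable_Upsilon As hAs P R γ hZ n s' a')
    filter_upwards [condExp_sum_mul_const_add_const_mul hm (P s a) (R s a) γ hint,
      ae_all_iff.2 hmax] with ω h_lin h_max
    refine le_of_le_of_eq (Finset.sum_le_sum fun s' _ => mul_le_mul_of_nonneg_left
      (add_le_add_right (mul_le_mul_of_nonneg_left (h_max s') hγ) _) (hP s a s')) h_lin.symm

theorem integral_Upsilon_condExp_le [IsFiniteMeasure μ] (hP : ∀ s a s', 0 ≤ P s a s')
    (hγ : 0 ≤ γ) {Z : S → A → Ω → ℝ} (hZ : ∀ s a, Integrable (Z s a) μ)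
    {m : MeasurableSpace Ω} (hm : m ≤ mΩ) (n : ℕ) (s : S) (a : A) :
    ∫ ω, Upsilon As hAs P R γ (fun s' a' => μ[Z s' a'|m]) n s a ω ∂μ
      ≤ ∫ ω, Upsilon As hAs P R γ Z n s a ω ∂μ :=
  (integral_mono_ae (integrable_Upsilon As hAs P R γ (fun _ _ => integrable_condExp) n s a)
    integrable_condExp (Upsilon_condExp_ae_le As hAs P R γ hP hγ hZ hm n s a)).trans_eq
    (integral_condExp hm)

theorem stepValue_integral_le_integral_Upsilon [IsProbabilityMeasure μ]
    (hP : ∀ s a s', 0 ≤ P s a s') (hγ : 0 ≤ γ) {Z : S → A → Ω → ℝ}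
    (hZ : ∀ s a, Integrable (Z s a) μ) (n : ℕ) (s : S) (a : A) :
    stepValue As hAs P R γ (fun s' a' => ∫ ω, Z s' a' ω ∂μ) n s a
      ≤ ∫ ω, Upsilon As hAs P R γ Z n s a ω ∂μ := by
  simpa only [condExp_bot, ← stepValue_eq_Upsilon, integral_const, probReal_univ, one_smul] using
    integral_Upsilon_condExp_le As hAs P R γ hP hγ hZ bot_le n s a

end Backup

end

theorem voc_stmt15_general {Ω S A : Type*} {mΩ : MeasurableSpace Ω} (μ : Measure Ω)
    [IsProbabilityMeasure μ] [Fintype S]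
    (As : S → Finset A) (hAs : ∀ s, (As s).Nonempty) (P R : S → A → S → ℝ)
    (hP : ∀ s a s', 0 ≤ P s a s')
    (γ : ℝ) (hγ : 0 ≤ γ) (Z : S → A → Ω → ℝ) (hZ : ∀ s a, Integrable (Z s a) μ)
    (m : MeasurableSpace Ω) (hm : m ≤ mΩ) :
    ∀ (n : ℕ) (s : S) (a : A),
      (∫ ω, stepValue As hAs P R γ (fun s' a' => (μ[Z s' a'|m]) ω) n s a ∂μ) ≤
          ∫ ω, Upsilon As hAs P R γ Z n s a ω ∂μ ∧
        stepValue As hAs P R γ (fun s' a' => ∫ ω, Z s' a' ω ∂μ) n s a ≤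
          ∫ ω, stepValue As hAs P R γ (fun s' a' => (μ[Z s' a'|m]) ω) n s a ∂μ := by
  intro n s a
  have h_slice : (fun ω => stepValue As hAs P R γ (fun s' a' => (μ[Z s' a'|m]) ω) n s a)
      = Upsilon As hAs P R γ (fun s' a' => μ[Z s' a'|m]) n s a :=
    funext (stepValue_eq_Upsilon As hAs P R γ _ n s a)
  have h_mean : (fun s' a' => ∫ ω, Z s' a' ω ∂μ) = fun s' a' => ∫ ω, (μ[Z s' a'|m]) ω ∂μ := by
    simp only [integral_condExp hm]
  rw [h_slice, h_mean]
  exact ⟨integral_Upsilon_condExp_le As hAs P R γ hP hγ hZ hm n s a,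
    stepValue_integral_le_integral_Upsilon As hAs P R γ hP hγ (fun _ _ => integrable_condExp) n s a⟩

/-- Sandwich between static and dynamic values: for a sub-σ-algebra `𝒢 ⊆ 𝓕`,
for every `n`, `s`, `a`, `ψ_n(s,a) ≥ E[φ_n^𝒢(s,a)] ≥ φ_n(s,a)`, where `ψ_n(s,a) = E[Υ_n(s,a)]`. -/
theorem voc_stmt15 {Ω S A : Type*} {mΩ : MeasurableSpace Ω} (μ : Measure Ω)
    [IsProbabilityMeasure μ] [Fintype S] [Nonempty S] [Fintype A] [Nonempty A]
    (As : S → Finset A) (hAs : ∀ s, (As s).Nonempty) (P R : S → A → S → ℝ)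
    (hP : ∀ s a s', 0 ≤ P s a s') (hPsum : ∀ s a, ∑ s', P s a s' = 1)
    (γ : ℝ) (hγ : 0 ≤ γ) (Z : S → A → Ω → ℝ) (hZ : ∀ s a, Integrable (Z s a) μ)
    (m : MeasurableSpace Ω) (hm : m ≤ mΩ) :
    ∀ (n : ℕ) (s : S) (a : A),
      (∫ ω, stepValue As hAs P R γ (fun s' a' => (μ[Z s' a'|m]) ω) n s a ∂μ) ≤
          ∫ ω, Upsilon As hAs P R γ Z n s a ω ∂μ ∧
        stepValue As hAs P R γ (fun s' a' => ∫ ω, Z s' a' ω ∂μ) n s a ≤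
          ∫ ω, stepValue As hAs P R γ (fun s' a' => (μ[Z s' a'|m]) ω) n s a ∂μ :=
  voc_stmt15_general μ As hAs P R hP γ hγ Z hZ m hm
end
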